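/- Let n be a positive integer and let k_1, …, k_n, k'_1, …, k'_n be integers, each at least 2, such that any two of these 2n integers are relatively prime. Let S' = {k_1ε_1, k'_1ε_1, …, k_nε_n, k'_nε_n} ⊆ ℤ^n and let S ⊆ S' be a subset such that for every i ∈ {1,…,n} at least one of k_iε_i, k'_iε_i belongs to S. If σ is a group automorphism of ℤ^n with σ(S) ⊆ S', then σ is the identity automorphism of ℤ^n. -/
import Mathlib


/-- Lemma 2.3: let `k_1, …, k_n, k'_1, …, k'_n` be pairwise relatively
prime integers, each at least `2`, let
`S' = {k_1 ε_1, k'_1 ε_1, …, k_n ε_n, k'_n ε_n} ⊆ ℤⁿ` and let `S ⊆ S'` involve all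
`ε_i`.  If `σ` is a group automorphism of `ℤⁿ` with `σ(S) ⊆ S'`, then `σ` is the
identity. -/
theorem zn_aut_mapping_S_into_S'_eq_id
    (n : ℕ) (hn : 0 < n) (k k' : Fin n → ℤ)
    (hk : ∀ i, 2 ≤ k i) (hk' : ∀ i, 2 ≤ k' i)
    (hcop : ∀ p q : Fin n ⊕ Fin n, p ≠ q →
      IsCoprime (Sum.elim k k' p) (Sum.elim k k' q))
    (S S' : Set (Fin n → ℤ))
    (hS' : S' = {v | ∃ i : Fin n,
      v = k i • Pi.single i (1 : ℤ) ∨ v = k' i • Pi.single i (1 : ℤ)})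
    (hSS' : S ⊆ S')
    (hall : ∀ i : Fin n,
      k i • Pi.single i (1 : ℤ) ∈ S ∨ k' i • Pi.single i (1 : ℤ) ∈ S)
    (σ : (Fin n → ℤ) ≃+ (Fin n → ℤ)) (hσ : σ '' S ⊆ S') :
    ∀ v : Fin n → ℤ, σ v = v := by
  subst hS'
  -- Step 1: σ fixes each standard basis vector.
  have key : ∀ i : Fin n, σ (Pi.single i (1 : ℤ)) = Pi.single i 1 := by
    intro i
    -- pick m ∈ {k i, k' i} (as an index p) with m • e_i ∈ S
    obtain ⟨p, hpi, hpS⟩ :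
        ∃ p : Fin n ⊕ Fin n, Sum.elim id id p = i ∧
          (Sum.elim k k' p) • Pi.single i (1 : ℤ) ∈ S := by
      rcases hall i with h | h
      · exact ⟨Sum.inl i, rfl, h⟩
      · exact ⟨Sum.inr i, rfl, h⟩
    set m := Sum.elim k k' p with hm
    have hm2 : 2 ≤ m := by
      rcases p with a | a <;> simp only [hm, Sum.elim_inl, Sum.elim_inr]
      · exact hk a
      · exact hk' a
    -- the image lies in S'
    obtain ⟨j, hj⟩ := hσ ⟨_, hpS, rfl⟩
    obtain ⟨q, hqj, hq⟩ :
        ∃ q : Fin n ⊕ Fin n, Sum.elim id id q = j ∧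
          σ (m • Pi.single i (1 : ℤ)) =
            (Sum.elim k k' q) • Pi.single j (1 : ℤ) := by
      rcases hj with h | h
      · exact ⟨Sum.inl j, rfl, h⟩
      · exact ⟨Sum.inr j, rfl, h⟩
    set c := Sum.elim k k' q with hc
    have hmain : m • σ (Pi.single i (1 : ℤ)) = c • Pi.single j (1 : ℤ) := by
      rw [← map_zsmul σ]; exact hq
    -- evaluate at j to see m ∣ c
    have hdvd : m ∣ c := by
      have := congrFun hmain j
      simp only [Pi.smul_apply, Pi.single_eq_same, smul_eq_mul, mul_one] at this
      exact ⟨_, this.symm⟩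
    -- coprimality forces p = q
    have hpq : p = q := by
      by_contra hne
      have hcp : IsCoprime m c := hcop p q hne
      have : IsUnit m := hcp.isUnit_of_dvd' dvd_rfl hdvd
      have := Int.isUnit_iff.mp this
      omega
    subst hpq
    have hij : i = j := hpi.symm.trans hqj
    subst hij
    have hmc : m = c := rfl
    rw [← hmc] at hmain
    have hm0 : m ≠ 0 := by omega
    exact smul_right_injective (Fin n → ℤ) hm0 hmain
  -- Step 2: conclude for all v.
  intro v
  have hv : v = ∑ i : Fin n, Pi.single i (v i) := (Finset.univ_sum_single v).symm
  calc σ v = σ (∑ i : Fin n, Pi.single i (v i)) := by rw [← hv]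
    _ = ∑ i : Fin n, σ (Pi.single i (v i)) := map_sum σ _ _
    _ = ∑ i : Fin n, σ (v i • Pi.single i (1 : ℤ)) := by
        refine Finset.sum_congr rfl fun i _ => ?_
        congr 1
        ext t
        by_cases h : t = i
        · subst h; simp
        · simp [Pi.single_eq_of_ne h]
    _ = ∑ i : Fin n, v i • σ (Pi.single i (1 : ℤ)) := by
        simp only [map_zsmul]
    _ = ∑ i : Fin n, Pi.single i (v i) := by
        refine Finset.sum_congr rfl fun i _ => ?_
        rw [key i]
        ext t
        by_cases h : t = i
        · subst h; simp
        · simp [Pi.single_eq_of_ne h]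
    _ = v := hv.symm
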